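/- arXiv:2605.09728 — 2 statements merged into one kernel-verified Lean document; each statement's English description precedes it below -/
import Mathlib

section
/- Let Γ be a countable set of sentences closed under Boolean operations, enumerated as {γ_i : i ∈ ω}, and equip C(Γ) ⊆ 2^ω with the ultrametric d(x,y) = max{2^{-i} : x(i) ≠ y(i)} (and d(x,x)=0). A class K of structures is axiomatizable by a single Γ-sentence if and only if the distance between the sets T_K and T_{K^c} is strictly positive, where K^c is the complement class. -/
/-!
If `K = γ i`, the patterns of a model and of a non-model of `K` differ at `i`, so they are at
distance at least `2⁻¹ ^ i`. Conversely, if the distance is at least `ε > 2⁻¹ ^ n`, two structures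
that agree on `γ 0, …, γ (n - 1)` are both in `K` or both outside it. Then `K` is a finite union
of cells, each cell a finite intersection of the sentences `γ i` and their negations, so it is a
single sentence since the `γ i` form a Boolean algebra.
-/

/-- The ultrametric `d(x,y) = max {2^{-i} : x i ≠ y i}` (with `d(x,x) = 0`) on `2^ω`. -/
noncomputable def cantorDist (x y : ℕ → Bool) : ℝ :=
  ⨆ (i : ℕ) (_ : x i ≠ y i), (2 : ℝ)⁻¹ ^ i

lemma cantorDist_le (x y : ℕ → Bool) {c : ℝ} (hc : 0 ≤ c)
    (h : ∀ i, x i ≠ y i → (2 : ℝ)⁻¹ ^ i ≤ c) : cantorDist x y ≤ c :=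
  Real.iSup_le (fun i => Real.iSup_le (h i) hc) hc

lemma le_cantorDist {x y : ℕ → Bool} {i : ℕ} (h : x i ≠ y i) :
    (2 : ℝ)⁻¹ ^ i ≤ cantorDist x y := by
  have hbdd : BddAbove (Set.range fun j : ℕ => ⨆ (_ : x j ≠ y j), (2 : ℝ)⁻¹ ^ j) :=
    ⟨1, Set.forall_mem_range.2 fun _ =>
      Real.iSup_le (fun _ => pow_le_one₀ (by norm_num) (by norm_num)) zero_le_one⟩
  exact (ciSup_pos h).symm.le.trans (le_ciSup hbdd i)

lemma cantorDist_le_of_forall_lt_eq {x y : ℕ → Bool} {n : ℕ} (h : ∀ i < n, x i = y i) :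
    cantorDist x y ≤ (2 : ℝ)⁻¹ ^ n :=
  cantorDist_le x y (by positivity) fun i hne =>
    pow_le_pow_of_le_one (by norm_num) (by norm_num) (not_lt.1 fun hi => hne (h i hi))

def BooleanSubalgebra.ofRange {α ι : Type*} [Nonempty ι] (γ : ι → Set α)
    (hinter : ∀ i j, ∃ k, γ k = γ i ∩ γ j) (hcompl : ∀ i, ∃ k, γ k = (γ i)ᶜ) :
    BooleanSubalgebra (Set α) where
  carrier := Set.range γ
  infClosed' := by
    rintro _ ⟨i, rfl⟩ _ ⟨j, rfl⟩
    exact hinter i j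
  supClosed' := by
    rintro _ ⟨i, rfl⟩ _ ⟨j, rfl⟩
    obtain ⟨i', hi'⟩ := hcompl i
    obtain ⟨j', hj'⟩ := hcompl j
    obtain ⟨k, hk⟩ := hinter i' j'
    obtain ⟨l, hl⟩ := hcompl k
    exact ⟨l, by rw [hl, hk, hi', hj', ← Set.compl_union, compl_compl]; rfl⟩
  compl_mem' := by
    rintro _ ⟨i, rfl⟩
    exact hcompl i
  bot_mem' := by
    obtain ⟨i⟩ := ‹Nonempty ι›
    obtain ⟨i', hi'⟩ := hcompl i
    obtain ⟨k, hk⟩ := hinter i i'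
    exact ⟨k, by rw [hk, hi', Set.inter_compl_self]; rfl⟩

@[simp]
lemma BooleanSubalgebra.mem_ofRange {α ι : Type*} [Nonempty ι] {γ : ι → Set α} {hinter hcompl}
    {K : Set α} : K ∈ BooleanSubalgebra.ofRange γ hinter hcompl ↔ ∃ i, γ i = K :=
  Iff.rfl

lemma BooleanSubalgebra.mem_of_saturated {α ι : Type*} (L : BooleanSubalgebra (Set α))
    {γ : ι → Set α} (hγ : ∀ i, γ i ∈ L) (s : Finset ι) {K : Set α}
    (hK : ∀ A ∈ K, ∀ B, (∀ i ∈ s, B ∈ γ i ↔ A ∈ γ i) → B ∈ K) : K ∈ L := by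
  classical
  let pattern : α → s → Bool := fun A i => decide (A ∈ γ i)
  let cell : (s → Bool) → Set α := fun t => ⋂ i, if t i then γ i else (γ i)ᶜ
  have mem_cell : ∀ B t, B ∈ cell t ↔ pattern B = t := by
    intro B t
    simp only [cell, pattern, Set.mem_iInter, funext_iff]
    refine forall_congr' fun i => ?_
    cases t i <;> by_cases hB : B ∈ γ i <;> simp [hB]
  have hK_eq : K = ⋃ t ∈ pattern '' K, cell t := by
    ext B
    simp only [Set.mem_iUnion, Set.mem_image, mem_cell, exists_prop]
    refine ⟨fun hB => ⟨_, ⟨B, hB, rfl⟩, rfl⟩, ?_⟩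
    rintro ⟨_, ⟨A, hA, rfl⟩, hBA⟩
    exact hK A hA B fun i hi => by simpa [pattern] using congrFun hBA ⟨i, hi⟩
  rw [hK_eq]
  refine L.biSup_mem (Set.toFinite _) fun t _ => L.iInf_mem fun i => ?_
  split
  · exact hγ i
  · exact L.compl_mem (hγ i)

theorem single_sentence_iff_dist_pos_general {Struc : Type*} (γ : ℕ → Set Struc)
    (hand : ∀ i j : ℕ, ∃ k, γ k = γ i ∩ γ j)
    (hneg : ∀ i : ℕ, ∃ k, γ k = (γ i)ᶜ)
    (K : Set Struc) :
    (∃ i, K = γ i) ↔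
      ∃ ε > (0 : ℝ), ∀ x y : ℕ → Bool,
        (∃ A ∈ K, ∀ i, A ∈ γ i ↔ x i = true) →
        (∃ B ∈ Kᶜ, ∀ i, B ∈ γ i ↔ y i = true) →
        ε ≤ cantorDist x y := by
  constructor
  · rintro ⟨i, rfl⟩
    refine ⟨(2 : ℝ)⁻¹ ^ i, by positivity, ?_⟩
    rintro x y ⟨A, hA, hxA⟩ ⟨B, hB, hyB⟩
    exact le_cantorDist (i := i) fun hxy => hB <| (hyB i).2 (hxy ▸ (hxA i).1 hA)
  · classical
    rintro ⟨ε, hε, hsep⟩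
    obtain ⟨n, hn⟩ := exists_pow_lt_of_lt_one hε (show (2 : ℝ)⁻¹ < 1 by norm_num)
    have hK : K ∈ BooleanSubalgebra.ofRange γ hand hneg := by
      refine (BooleanSubalgebra.ofRange γ hand hneg).mem_of_saturated
        (fun i => ⟨i, rfl⟩) (Finset.range n) fun A hA B hAB => ?_
      by_contra hB
      have hdist := hsep (fun i => decide (A ∈ γ i)) (fun i => decide (B ∈ γ i))
        ⟨A, hA, by simp⟩ ⟨B, hB, by simp⟩
      have hclose : cantorDist (fun i => decide (A ∈ γ i)) (fun i => decide (B ∈ γ i)) ≤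
          (2 : ℝ)⁻¹ ^ n :=
        cantorDist_le_of_forall_lt_eq fun i hi => by simp [hAB i (Finset.mem_range.2 hi)]
      linarith
    obtain ⟨i, hi⟩ := BooleanSubalgebra.mem_ofRange.1 hK
    exact ⟨i, hi.symm⟩

/-- For a countable Boolean-closed set of sentences `Γ = {γ i : i ∈ ω}` (each
sentence identified with its class `γ i` of models), a class `K` is axiomatizable by a single
`Γ`-sentence iff the distance between `T_K` and `T_{K^c}` is strictly positive. -/
theorem single_sentence_iff_dist_pos {Struc : Type*} (γ : ℕ → Set Struc)
    (hand : ∀ i j : ℕ, ∃ k, γ k = γ i ∩ γ j)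
    (hor : ∀ i j : ℕ, ∃ k, γ k = γ i ∪ γ j)
    (hneg : ∀ i : ℕ, ∃ k, γ k = (γ i)ᶜ)
    (K : Set Struc) :
    (∃ i, K = γ i) ↔
      ∃ ε > (0 : ℝ), ∀ x y : ℕ → Bool,
        (∃ A ∈ K, ∀ i, A ∈ γ i ↔ x i = true) →
        (∃ B ∈ Kᶜ, ∀ i, B ∈ γ i ↔ y i = true) →
        ε ≤ cantorDist x y :=
  single_sentence_iff_dist_pos_general γ hand hneg K
end

section
/- Conversely to the closure property of ultraproducts on type spaces: if U is the set of complete theories tp(A_i, R^i) for i ∈ I (structures with distinguished relations) and p is a complete theory in the topological closure of U, then there exist a subset L ⊆ I, an ultrafilter G on L, and for each l ∈ L relations S^l on A_l of the prescribed kinds, such that the ultraproduct B = ∏_{l∈L} A_l / G with relations S = ∏ S^l / G satisfies tp(B, S) = p. -/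
open FirstOrder Language Filter

universe u v t w

/-- The language consisting of relation variables `X i` for `i : ι`, with `X i` of arity
`ar i`. -/
def varLangI (ι : Type t) (ar : ι → ℕ) : FirstOrder.Language :=
  ⟨fun _ => Empty, fun m => {i : ι // ar i = m}⟩

/-- Interpreting the relation variables by concrete relations on `M`. -/
def varStructureI {M : Type w} {ι : Type t} {ar : ι → ℕ}
    (R : ∀ i : ι, (Fin (ar i) → M) → Prop) : (varLangI ι ar).Structure M where
  funMap := fun f _ => f.elim
  RelMap := fun r v => R r.1 fun j => v (Fin.cast r.2 j)

/-- The complete first-order theory `tp(M, R)` of `M` with distinguished relations `R`,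
viewed as a point of `2^λ`. -/
noncomputable def tpPoint {L : FirstOrder.Language.{u, v}} {ι : Type t} {ar : ι → ℕ}
    (M : Type w) [iM : L.Structure M] (R : ∀ i : ι, (Fin (ar i) → M) → Prop) :
    (L.sum (varLangI ι ar)).Sentence → Bool :=
  fun φ =>
    @decide
      (@FirstOrder.Language.Sentence.Realize _ M
        (@FirstOrder.Language.sumStructure L (varLangI ι ar) M iM (varStructureI R)) φ)
      (Classical.dec _)

/-- The ultraproduct `∏ Rᵢ / F` of a family of `k`-ary relations. -/
def productRel {I : Type*} (F : Ultrafilter I) (A : I → Type w) (k : ℕ)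
    (R : ∀ i, (Fin k → A i) → Prop) : (Fin k → (F : Filter I).Product A) → Prop :=
  fun t =>
    ∃ g : ∀ i, Fin k → A i,
      (∀ m, t m = Quotient.mk ((F : Filter I).productSetoid A) fun i => g i m) ∧
        {i : I | R i (g i)} ∈ F

/-- Auxiliary extensionality lemma for first-order structures. -/
theorem structure_ext' {L : FirstOrder.Language} {M : Type*} (S T : L.Structure M)
    (hf : ∀ (n) (f : L.Functions n) (x : Fin n → M),
      @Structure.funMap L M S n f x = @Structure.funMap L M T n f x)
    (hr : ∀ (n) (r : L.Relations n) (x : Fin n → M),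
      @Structure.RelMap L M S n r x ↔ @Structure.RelMap L M T n r x) : S = T := by
  obtain ⟨Sf, Sr⟩ := S
  obtain ⟨Tf, Tr⟩ := T
  congr
  · funext n f x
    exact hf n f x
  · funext n r x
    exact propext (hr n r x)

/-- The `sumStructure` assembled from the ultraproduct `L`-structure and the ultraproducts of
the relations is the genuine ultraproduct structure for the sum language. -/
theorem key_structure_eq {L : FirstOrder.Language.{u, v}} {ι : Type t} {ar : ι → ℕ}
    {J : Type w} (B : J → Type w) [iB : ∀ j, L.Structure (B j)] (G : Ultrafilter J)
    (Sf : ∀ j, ∀ v : ι, (Fin (ar v) → B j) → Prop) :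
    (@Language.sumStructure L (varLangI ι ar) ((G : Filter J).Product B) Ultraproduct.structure
      (varStructureI fun v => productRel G B (ar v) fun j => Sf j v)) =
    (@Ultraproduct.structure J B G (L.sum (varLangI ι ar))
      (fun j => @Language.sumStructure L (varLangI ι ar) (B j) (iB j) (varStructureI (Sf j)))) := by
  letI iV : ∀ j, (varLangI ι ar).Structure (B j) := fun j => varStructureI (Sf j)
  letI iF : ∀ j, (L.sum (varLangI ι ar)).Structure (B j) :=
    fun j => @Language.sumStructure L (varLangI ι ar) (B j) (iB j) (varStructureI (Sf j))
  apply structure_ext'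
  · intro n f x
    cases f with
    | inl f => rfl
    | inr f => exact f.elim
  · intro n r x
    obtain ⟨g, hg⟩ : ∃ g : Fin n → ∀ j, B j,
        ∀ m, x m = Quotient.mk ((G : Filter J).productSetoid B) (g m) := by
      choose g hg using fun m => Quotient.exists_rep (x m)
      exact ⟨g, fun m => (hg m).symm⟩
    cases r with
    | inl r => rfl
    | inr r =>
      have hx : x = fun m => Quotient.mk ((G : Filter J).productSetoid B) (g m) := funext hg
      subst hx
      have h2 : @Structure.RelMap _ _
          (@Ultraproduct.structure J B G (L.sum (varLangI ι ar)) iF) n (Sum.inr r)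
          (fun m => Quotient.mk ((G : Filter J).productSetoid B) (g m)) ↔
          ∀ᶠ j in (G : Filter J), Sf j r.1 fun q => g (Fin.cast r.2 q) j :=
        @relMap_quotient_mk' (L.sum (varLangI ι ar)) _ ((G : Filter J).productSetoid B)
          (Ultraproduct.setoidPrestructure B G) n (Sum.inr r) g
      rw [h2]
      show productRel G B (ar r.1) (fun j => Sf j r.1)
          (fun q => Quotient.mk ((G : Filter J).productSetoid B) (g (Fin.cast r.2 q))) ↔ _
      constructor
      · rintro ⟨gg, hgg, hmem⟩
        have hae : ∀ᶠ j in (G : Filter J), ∀ q, g (Fin.cast r.2 q) j = gg j q := by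
          rw [Filter.eventually_all]
          intro q
          exact Quotient.exact (hgg q)
        filter_upwards [hae, hmem] with j hj1 hj2
        have : (fun q => g (Fin.cast r.2 q) j) = gg j := funext hj1
        rw [this]
        exact hj2
      · intro h
        exact ⟨fun j q => g (Fin.cast r.2 q) j, fun q => rfl, h⟩

/-- if `p` lies in the topological closure of the set of types
`tp(A i, R i)`, then `p` is realized by an ultraproduct: there are a subset `J ⊆ I`, an
ultrafilter `G` on `J`, and relations `S j` on the factors `A j`, such that the ultraproduct of
the `A j` over `G`, with the ultraproducts of the relations `S j`, has type exactly `p`. -/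
theorem closure_point_is_type_of_ultraproduct {L : FirstOrder.Language.{u, v}} {ι : Type t}
    {ar : ι → ℕ} {I : Type w} (A : I → Type w) [∀ i, L.Structure (A i)] [∀ i, Nonempty (A i)]
    (Rf : ∀ i, ∀ v : ι, (Fin (ar v) → A i) → Prop)
    (p : (L.sum (varLangI ι ar)).Sentence → Bool)
    (hp : p ∈ closure (Set.range fun i : I => tpPoint (L := L) (A i) (Rf i))) :
    ∃ (J : Set I) (G : Ultrafilter J) (Sf : ∀ j : J, ∀ v : ι, (Fin (ar v) → A j) → Prop),
      tpPoint (L := L) ((G : Filter ↥J).Product fun j : J => A j)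
          (fun v => productRel G (fun j : J => A j) (ar v) fun j => Sf j v) = p := by
  classical
  -- Step 1: finite fragments of `p` are realized by some `tp(A i, Rf i)`.
  have hfin : ∀ t : Finset ((L.sum (varLangI ι ar)).Sentence),
      ∃ i : I, ∀ φ ∈ t, tpPoint (L := L) (A i) (Rf i) φ = p φ := by
    intro t
    have hU : (↑t : Set _).pi (fun φ => ({p φ} : Set Bool)) ∈ nhds p :=
      set_pi_mem_nhds t.finite_toSet fun φ _ => IsOpen.mem_nhds (isOpen_discrete _) rfl
    obtain ⟨q, hq1, i, rfl⟩ := mem_closure_iff_nhds.mp hp _ hU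
    exact ⟨i, fun φ hφ => hq1 φ hφ⟩
  -- Step 2: build the ultrafilter on `↥(Set.univ)`.
  let E : (L.sum (varLangI ι ar)).Sentence → Set ↥(Set.univ : Set I) :=
    fun φ => {j | tpPoint (L := L) (A ↑j) (Rf ↑j) φ = p φ}
  have hne : (Filter.generate (Set.range E)).NeBot := by
    rw [Filter.generate_neBot_iff]
    intro s hs hsfin
    obtain ⟨tf, rfl⟩ := hsfin.exists_finset_coe
    obtain ⟨i, hi⟩ := hfin (tf.attach.image fun u => Classical.choose (hs u.2))
    refine ⟨⟨i, trivial⟩, ?_⟩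
    intro u hu
    have hu' : u ∈ tf := hu
    have hspec := Classical.choose_spec (hs hu')
    rw [← hspec]
    exact hi _ (Finset.mem_image.mpr ⟨⟨u, hu'⟩, Finset.mem_attach _ _, rfl⟩)
  haveI := hne
  let G : Ultrafilter ↥(Set.univ : Set I) := Ultrafilter.of (Filter.generate (Set.range E))
  have hEG : ∀ φ, E φ ∈ G := fun φ =>
    Ultrafilter.of_le _ (Filter.mem_generate_of_mem (Set.mem_range_self φ))
  letI iV : ∀ j : ↥(Set.univ : Set I), (varLangI ι ar).Structure (A ↑j) :=
    fun j => varStructureI (Rf ↑j)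
  refine ⟨Set.univ, G, fun j v => Rf ↑j v, ?_⟩
  funext φ
  have hSS := key_structure_eq (L := L) (fun j : ↥(Set.univ : Set I) => A ↑j) G (fun j v => Rf ↑j v)
  have hev : ∀ᶠ j in (G : Filter ↥(Set.univ : Set I)),
      tpPoint (L := L) (A j.1) (Rf j.1) φ = p φ := hEG φ
  unfold tpPoint
  rw [hSS]
  cases hb : p φ with
  | true =>
    apply decide_eq_true
    rw [Ultraproduct.sentence_realize]
    refine hev.mono fun j hj => ?_
    rw [hb] at hj
    exact of_decide_eq_true hj
  | false =>
    apply decide_eq_false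
    rw [Ultraproduct.sentence_realize]
    intro h
    obtain ⟨j, hj1, hj2⟩ := (h.and hev).exists
    rw [hb] at hj2
    exact of_decide_eq_false hj2 hj1
end
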